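/- Let f(n) denote the number of permutations w of {1,…,n} such that both w and w⁻¹ are alternating, and let f*(n) denote the number of permutations w of {1,…,n} such that w is alternating and w⁻¹ is reverse alternating. Then for every k ≥ 0, f*(2k+1) = f(2k+1). -/

import Mathlib

/-!
Let `rev i = n - 1 - i`. Right multiplication by `rev` reads the word of `w` backwards, which for
odd `n` turns an alternating word into an alternating one; on the inverse it becomes left
multiplication by `rev`, i.e. complementing the values, which exchanges alternating and reverse
alternating. Hence `w ↦ w * rev` is a bijection between the two sets being counted.
-/

open scoped BigOperators

/-- A permutation `w` of `{0,…,n-1}` (as the word `w 0, w 1, …`) is alternating: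
`a₁ > a₂ < a₃ > a₄ < ⋯`, i.e. the (0-indexed) descents are exactly the even positions. -/
def IsAltPerm {n : ℕ} (w : Equiv.Perm (Fin n)) : Prop :=
  ∀ i : ℕ, ∀ h : i + 1 < n, (w ⟨i + 1, h⟩ < w ⟨i, Nat.lt_of_succ_lt h⟩ ↔ Even i)

/-- A permutation is reverse alternating: `a₁ < a₂ > a₃ < a₄ > ⋯`, i.e. the
(0-indexed) descents are exactly the odd positions. -/
def IsRevAltPerm {n : ℕ} (w : Equiv.Perm (Fin n)) : Prop :=
  ∀ i : ℕ, ∀ h : i + 1 < n, (w ⟨i + 1, h⟩ < w ⟨i, Nat.lt_of_succ_lt h⟩ ↔ Odd i)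

/-- `f n`: number of `w` with both `w` and `w⁻¹` alternating. -/
noncomputable def doublyAlt (n : ℕ) : ℕ :=
  Nat.card {w : Equiv.Perm (Fin n) // IsAltPerm w ∧ IsAltPerm w⁻¹}

/-- `f* n`: number of `w` with `w` alternating and `w⁻¹` reverse alternating. -/
noncomputable def mixedAlt (n : ℕ) : ℕ :=
  Nat.card {w : Equiv.Perm (Fin n) // IsAltPerm w ∧ IsRevAltPerm w⁻¹}

@[simp]
theorem Fin.revPerm_mul_revPerm {n : ℕ} : (Fin.revPerm : Equiv.Perm (Fin n)) * Fin.revPerm = 1 :=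
  Equiv.ext Fin.rev_rev

theorem Fin.revPerm_inv {n : ℕ} : (Fin.revPerm : Equiv.Perm (Fin n))⁻¹ = Fin.revPerm :=
  inv_eq_of_mul_eq_one_right Fin.revPerm_mul_revPerm

theorem Equiv.Perm.apply_lt_apply_iff_not_lt {α : Type*} [LinearOrder α] (w : Equiv.Perm α)
    {a b : α} (hab : a ≠ b) : w a < w b ↔ ¬ w b < w a := by
  rw [not_lt]
  exact (w.injective.ne hab).le_iff_lt.symm

section

variable {n : ℕ}

theorem isAltPerm_revPerm_mul_iff (w : Equiv.Perm (Fin n)) :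
    IsAltPerm (Fin.revPerm * w) ↔ IsRevAltPerm w := by
  refine forall₂_congr fun i h => ?_
  rw [Equiv.Perm.mul_apply, Equiv.Perm.mul_apply, Fin.revPerm_apply, Fin.revPerm_apply,
    Fin.rev_lt_rev, w.apply_lt_apply_iff_not_lt (Fin.ne_of_val_ne i.ne_add_one),
    ← Nat.not_even_iff_odd, not_iff_comm]
  exact iff_comm

theorem IsAltPerm.mul_revPerm (hn : Odd n) {w : Equiv.Perm (Fin n)} (hw : IsAltPerm w) :
    IsAltPerm (w * Fin.revPerm) := by
  intro i h
  obtain ⟨j, hij⟩ : ∃ j, i + j + 2 = n := ⟨n - 2 - i, by omega⟩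
  have hj : j + 1 < n := by omega
  have hrev₁ : Fin.revPerm (⟨i + 1, h⟩ : Fin n) = ⟨j, Nat.lt_of_succ_lt hj⟩ := by
    ext; simp only [Fin.revPerm_apply, Fin.val_rev]; omega
  have hrev₀ : Fin.revPerm (⟨i, Nat.lt_of_succ_lt h⟩ : Fin n) = ⟨j + 1, hj⟩ := by
    ext; simp only [Fin.revPerm_apply, Fin.val_rev]; omega
  have hparity : Even i ↔ ¬ Even j := by
    have hodd : ¬ Even (i + j) := fun he ↦ Nat.not_even_iff_odd.mpr hn (hij ▸ he.add even_two)
    rw [Nat.even_add] at hodd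
    tauto
  rw [Equiv.Perm.mul_apply, Equiv.Perm.mul_apply, hrev₁, hrev₀,
    w.apply_lt_apply_iff_not_lt (Fin.ne_of_val_ne j.ne_add_one), hw j hj, hparity]

theorem isAltPerm_mul_revPerm_iff (hn : Odd n) (w : Equiv.Perm (Fin n)) :
    IsAltPerm (w * Fin.revPerm) ↔ IsAltPerm w := by
  refine ⟨fun hw => ?_, IsAltPerm.mul_revPerm hn⟩
  simpa [mul_assoc] using hw.mul_revPerm hn

end

/-- For every k ≥ 0, f*(2k+1) = f(2k+1). -/
theorem stmt_1 (k : ℕ) : mixedAlt (2 * k + 1) = doublyAlt (2 * k + 1) := by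
  refine Nat.card_congr (Equiv.subtypeEquiv (Equiv.mulRight Fin.revPerm) fun w => ?_)
  rw [Equiv.coe_mulRight, mul_inv_rev, Fin.revPerm_inv,
    isAltPerm_mul_revPerm_iff (odd_two_mul_add_one k), isAltPerm_revPerm_mul_iff]
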